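/- Let S be any n×n matrix over ℤ[t,t⁻¹], let J be S padded with a last row (0,…,0,1) and last column (0,…,0,1)ᵀ, and let Ω' be the identity of size n+1 except with bottom-right 2×2 block [[1−t, −t²],[1, 1+t]]. Then det(J·Ω' − I) = t · det(S − I). -/

import Mathlib

open Matrix LaurentPolynomial

/-- Pad an `n × n` matrix with a last row `(0,…,0,1)` and last column `(0,…,0,1)ᵀ`. -/
noncomputable def pad (n : ℕ) (S : Matrix (Fin n) (Fin n) (LaurentPolynomial ℤ)) :
    Matrix (Fin (n + 1)) (Fin (n + 1)) (LaurentPolynomial ℤ) :=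
  Matrix.of fun i j =>
    if hi : (i : ℕ) < n then
      if hj : (j : ℕ) < n then S ⟨i, hi⟩ ⟨j, hj⟩ else 0
    else if (j : ℕ) < n then 0 else 1

/-- The `(n+1) × (n+1)` identity except the bottom-right `2 × 2` block is
`[[1-t, -t²], [1, 1+t]]` (requires `1 ≤ n`). -/
noncomputable def wadaStabInv (n : ℕ) (hn : 1 ≤ n) :
    Matrix (Fin (n + 1)) (Fin (n + 1)) (LaurentPolynomial ℤ) :=
  1 + Matrix.single ⟨n - 1, by omega⟩ ⟨n - 1, by omega⟩ (-(T 1))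
    + Matrix.single ⟨n - 1, by omega⟩ ⟨n, by omega⟩ (-(T 2))
    + Matrix.single ⟨n, by omega⟩ ⟨n - 1, by omega⟩ 1
    + Matrix.single ⟨n, by omega⟩ ⟨n, by omega⟩ (T 1)

/-!
Reindex `Fin (n + 1)` as `Fin n ⊕ Fin 1`. Then `J = [[S, 0], [0, 1]]` and
`Ω' = [[P, Q], [C, 1 + t]]`, so `J Ω' - I = [[S P - I, S Q], [C, t]]`. Expanding the determinant
around the invertible corner `t` gives `t · det (S (P - Q t⁻¹ C) - I)`, and the Schur complement
`P - Q t⁻¹ C` of the block of `Ω'` is the identity: the `-t` in `P` is cancelled by `(-t²) t⁻¹ · 1`.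
-/

namespace Matrix

variable {m o R : Type*} [DecidableEq m] [Fintype o] [DecidableEq o] [CommRing R]

noncomputable instance invertibleScalar (t : R) [Invertible t] : Invertible (scalar o t) :=
  Invertible.map (scalar o) t

theorem one_add_single_neg_sub_single_mul_invOf_scalar_mul_single (k : m) (t : R)
    [Invertible t] :
    1 + single k k (-t) - single k (0 : Fin 1) (-t ^ 2) * ⅟(scalar (Fin 1) t) *
      (single 0 k 1 : Matrix (Fin 1) m R) = 1 := by
  rw [single_mul_mul_single, ← map_invOf, scalar_apply, diagonal_apply_eq, mul_one, pow_two,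
    neg_mul, mul_invOf_cancel_right, add_sub_cancel_right]

variable [Fintype m]

theorem det_fromBlocks_one_mul_sub_one (S P : Matrix m m R) (Q : Matrix m o R)
    (C : Matrix o m R) (D : Matrix o o R) [Invertible D] (hP : P - Q * ⅟D * C = 1) :
    (fromBlocks S 0 0 1 * fromBlocks P Q C (1 + D) - 1).det = D.det * (S - 1).det := by
  have hblocks : fromBlocks S 0 0 1 * fromBlocks P Q C (1 + D) - 1
      = fromBlocks (S * P - 1) (S * Q) C D := by
    simp only [fromBlocks_multiply, ← fromBlocks_one, sub_eq_add_neg, fromBlocks_neg,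
      fromBlocks_add]
    simp
  have hschur : S * P - 1 - S * Q * ⅟D * C = S * (P - Q * ⅟D * C) - 1 := by
    simp only [Matrix.mul_sub, Matrix.mul_assoc]
    abel
  rw [hblocks, det_fromBlocks₂₂, hschur, hP, Matrix.mul_one]

end Matrix

theorem pad_submatrix_finSumFinEquiv (n : ℕ) (S : Matrix (Fin n) (Fin n) (LaurentPolynomial ℤ)) :
    (pad n S).submatrix finSumFinEquiv finSumFinEquiv = fromBlocks S 0 0 1 := by
  ext (i | i) (j | j) : 1 <;> simp [pad, Fin.ext_iff, one_apply]

theorem wadaStabInv_submatrix_finSumFinEquiv (n : ℕ) (hn : 1 ≤ n) :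
    (wadaStabInv n hn).submatrix finSumFinEquiv finSumFinEquiv =
      fromBlocks (1 + single ⟨n - 1, by omega⟩ ⟨n - 1, by omega⟩ (-T 1))
        (single ⟨n - 1, by omega⟩ 0 (-T 1 ^ 2)) (single 0 ⟨n - 1, by omega⟩ 1)
        (1 + scalar (Fin 1) (T 1)) := by
  ext (i | i) (j | j) : 1 <;>
    simp only [wadaStabInv, submatrix_apply, Matrix.add_apply, one_apply, single_apply,
      Fin.ext_iff, finSumFinEquiv_apply_left, finSumFinEquiv_apply_right, fromBlocks_apply₁₁,
      fromBlocks_apply₁₂, fromBlocks_apply₂₁, fromBlocks_apply₂₂, Fin.val_castAdd, Fin.val_natAdd,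
      Fin.fin_one_eq_zero, Fin.val_zero, add_zero, and_true, true_and, scalar_apply,
      diagonal_apply_eq, T_pow] <;>
    split_ifs <;> first | omega | simp

theorem stmt16 (n : ℕ) (hn : 1 ≤ n) (S : Matrix (Fin n) (Fin n) (LaurentPolynomial ℤ)) :
    (pad n S * wadaStabInv n hn - 1).det = T 1 * (S - 1).det := by
  rw [← det_submatrix_equiv_self finSumFinEquiv, submatrix_sub, Pi.sub_apply, Pi.sub_apply,
    ← submatrix_mul_equiv _ _ _ finSumFinEquiv, submatrix_one_equiv,
    pad_submatrix_finSumFinEquiv, wadaStabInv_submatrix_finSumFinEquiv,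
    det_fromBlocks_one_mul_sub_one S _ _ _ _
      (one_add_single_neg_sub_single_mul_invOf_scalar_mul_single _ (T 1)),
    det_fin_one, scalar_apply, diagonal_apply_eq]
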